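/- arXiv:1903.10337 — 2 statements merged into one kernel-verified Lean document; each statement's English description precedes it below -/
import Mathlib

section
/- Let f : ℝ → ℝ be f(x) = tanh(x/√2). Then for every real x, f⁶⁾(x) + f⁗(x) − 18 f(x) f″(x)² − 36 f′(x)² f″(x) − 24 f(x) f′(x) f‴(x) − 3 f(x)² f⁗(x) = 0, where fᵏ⁾ denotes the k-th derivative of f. -/
open Polynomial Real

lemma tanh_hasDerivAt (u : ℝ) : HasDerivAt Real.tanh (1 - Real.tanh u ^ 2) u := by
  have h := (Real.hasDerivAt_sinh u).div (Real.hasDerivAt_cosh u) (Real.cosh_pos u).ne'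
  have heq : Real.tanh = fun x => Real.sinh x / Real.cosh x := by
    funext x; exact Real.tanh_eq_sinh_div_cosh x
  rw [heq]
  convert h using 1
  have hc := (Real.cosh_pos u).ne'
  case e'_4 => rfl
  case e'_5 => rfl
  case e'_8 => rfl
  field_simp

noncomputable def P : ℕ → Polynomial ℝ
  | 0 => Polynomial.X
  | n + 1 => (P n).derivative * (1 - Polynomial.X ^ 2)

lemma key (f : ℝ → ℝ) (hf : ∀ x, f x = Real.tanh (x / Real.sqrt 2)) (n : ℕ) (x : ℝ) :
    iteratedDeriv n f x = ((Real.sqrt 2)⁻¹) ^ n * (P n).eval (Real.tanh (x / Real.sqrt 2)) := by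
  induction n generalizing x with
  | zero => simp [hf, P]
  | succ n ih =>
    rw [iteratedDeriv_succ]
    have hfun : iteratedDeriv n f = fun x =>
        ((Real.sqrt 2)⁻¹) ^ n * (P n).eval (Real.tanh (x / Real.sqrt 2)) := funext ih
    rw [hfun]
    have hT : HasDerivAt (fun x : ℝ => Real.tanh (x / Real.sqrt 2))
        ((1 - Real.tanh (x / Real.sqrt 2) ^ 2) * (Real.sqrt 2)⁻¹) x := by
      have hd : HasDerivAt (fun x : ℝ => x / Real.sqrt 2) (Real.sqrt 2)⁻¹ x := by
        simpa [div_eq_mul_inv] using (hasDerivAt_id x).mul_const (Real.sqrt 2)⁻¹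
      exact (tanh_hasDerivAt (x / Real.sqrt 2)).comp x hd
    have hP : HasDerivAt (fun x : ℝ =>
        ((Real.sqrt 2)⁻¹) ^ n * (P n).eval (Real.tanh (x / Real.sqrt 2)))
        (((Real.sqrt 2)⁻¹) ^ n * ((P n).derivative.eval (Real.tanh (x / Real.sqrt 2)) *
          ((1 - Real.tanh (x / Real.sqrt 2) ^ 2) * (Real.sqrt 2)⁻¹))) x :=
      (((P n).hasDerivAt _).comp x hT).const_mul _
    rw [hP.deriv, P]
    simp
    ring

/-- For `f(x) = tanh(x/√2)`, the μ-independent stationary part of the sixth-order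
Cahn–Hilliard operator vanishes:
`f⁶⁾ + f⁗ − 18 f f″² − 36 f′² f″ − 24 f f′ f‴ − 3 f² f⁗ = 0`. -/
theorem stmt_11 (f : ℝ → ℝ) (hf : ∀ x, f x = Real.tanh (x / Real.sqrt 2)) :
    ∀ x : ℝ,
      iteratedDeriv 6 f x + iteratedDeriv 4 f x
        - 18 * f x * (iteratedDeriv 2 f x) ^ 2
        - 36 * (deriv f x) ^ 2 * iteratedDeriv 2 f x
        - 24 * f x * deriv f x * iteratedDeriv 3 f x
        - 3 * (f x) ^ 2 * iteratedDeriv 4 f x = 0 := by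
  intro x
  have hd : deriv f x = iteratedDeriv 1 f x := congrFun (iteratedDeriv_one (f := f)).symm x
  rw [hd, hf x, key f hf 6 x, key f hf 4 x, key f hf 2 x, key f hf 1 x, key f hf 3 x]
  set t := Real.tanh (x / Real.sqrt 2) with ht
  set q := (Real.sqrt 2)⁻¹ with hqdef
  have hq : q ^ 2 = 1 / 2 := by
    rw [hqdef, inv_pow, Real.sq_sqrt] <;> norm_num
  simp only [P]
  simp [Polynomial.derivative_mul, Polynomial.derivative_sub, Polynomial.derivative_one,
    Polynomial.derivative_X_pow]
  linear_combination (q^4 * (720*t^7 - 1680*t^5 + 1232*t^3 - 272*t)) * hq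
end

section
/- Let α > 0 and μ be real numbers, let u₀(x) = tanh(x/√2) and u₁(x,t) = (μ sech²(x/√2)/(√2 Γ(α+1))) t^{α}. Define, for t > 0, u₂(x,t) = J^α[ μ ∂ₓu₁ − ∂ₓ²u₁ − ∂ₓ⁴u₁ + 6(u₀+u₁)(∂ₓ(u₀+u₁))² + 3(u₀+u₁)²∂ₓ²(u₀+u₁) − 6u₀(u₀′)² − 3u₀²u₀″ ](x,t), where J^α acts in the t-variable. Then for every real x and every t > 0, u₂(x,t) = −(μ² tanh(x/√2) sech²(x/√2)/Γ(2α+1)) t^{2α} + (3μ² Γ(2α+1)(4cosh(√2x) − 11) tanh(x/√2) sech⁶(x/√2)/(2Γ(α+1)²Γ(3α+1))) t^{3α} + (3μ³ Γ(3α+1)(3cosh(√2x) − 4) sech⁸(x/√2)/(2√2 Γ(α+1)³Γ(4α+1))) t^{4α}. -/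
noncomputable section NIMaux

private def ch (x : ℝ) : ℝ := Real.cosh (x / Real.sqrt 2)
private def sh (x : ℝ) : ℝ := Real.sinh (x / Real.sqrt 2)

private lemma ch_pos (x : ℝ) : 0 < ch x := by unfold ch; exact Real.cosh_pos _
private lemma ch_ne (x : ℝ) : ch x ≠ 0 := (ch_pos x).ne'
private lemma sq2 : Real.sqrt 2 ^ 2 = 2 := Real.sq_sqrt (by norm_num)
private lemma r2_pos : (0:ℝ) < Real.sqrt 2 := Real.sqrt_pos.mpr (by norm_num)
private lemma r2_ne : (Real.sqrt 2) ≠ 0 := r2_pos.ne'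
private lemma ch_sq (x : ℝ) : ch x ^ 2 - sh x ^ 2 = 1 := Real.cosh_sq_sub_sinh_sq _

private lemma hch (x : ℝ) : HasDerivAt ch (sh x / Real.sqrt 2) x := by
  have h := ((hasDerivAt_id x).div_const (Real.sqrt 2)).cosh
  unfold ch sh; simpa [div_eq_mul_inv] using h

private lemma hsh (x : ℝ) : HasDerivAt sh (ch x / Real.sqrt 2) x := by
  have h := ((hasDerivAt_id x).div_const (Real.sqrt 2)).sinh
  unfold ch sh; simpa [div_eq_mul_inv] using h

private def F0 (x : ℝ) : ℝ := (1 / ch x) ^ 2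
private def F1 (x : ℝ) : ℝ := -Real.sqrt 2 * sh x / ch x ^ 3
private def F2 (x : ℝ) : ℝ := (3 * sh x ^ 2 - ch x ^ 2) / ch x ^ 4
private def F3 (x : ℝ) : ℝ := Real.sqrt 2 * (4 * sh x * ch x ^ 2 - 6 * sh x ^ 3) / ch x ^ 5
private def F4 (x : ℝ) : ℝ := (4 * ch x ^ 4 - 30 * sh x ^ 2 * ch x ^ 2 + 30 * sh x ^ 4) / ch x ^ 6
private def U0 (x : ℝ) : ℝ := Real.tanh (x / Real.sqrt 2)
private def G1 (x : ℝ) : ℝ := 1 / (Real.sqrt 2 * ch x ^ 2)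
private def G2 (x : ℝ) : ℝ := -sh x / ch x ^ 3

private lemma hF0 (x : ℝ) : HasDerivAt F0 (F1 x) x := by
  have h : HasDerivAt F0 _ x := ((hasDerivAt_const x (1:ℝ)).div (hch x) (ch_ne x)).pow 2
  convert h using 1
  have hc := ch_ne x
  simp only [F1, Pi.div_apply, Pi.pow_apply, Pi.mul_apply, Pi.sub_apply, Nat.cast_ofNat, Nat.reduceSub, pow_one]
  field_simp [F1]
  linear_combination (-sh x) * sq2

private lemma hF1 (x : ℝ) : HasDerivAt F1 (F2 x) x := by
  have h : HasDerivAt F1 _ x := (((hsh x).const_mul (-Real.sqrt 2)).div ((hch x).pow 3) (pow_ne_zero 3 (ch_ne x)))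
  convert h using 1
  have hc := ch_ne x
  simp only [F2, Pi.div_apply, Pi.pow_apply, Pi.mul_apply, Pi.sub_apply, Nat.cast_ofNat, Nat.reduceSub, pow_one]
  field_simp [F2]
  linear_combination (0 : ℝ) * sq2

private lemma hF2 (x : ℝ) : HasDerivAt F2 (F3 x) x := by
  have h : HasDerivAt F2 _ x := ((((hsh x).pow 2).const_mul 3).sub ((hch x).pow 2)).div ((hch x).pow 4)
    (pow_ne_zero 4 (ch_ne x))
  convert h using 1
  have hc := ch_ne x
  simp only [F3, Pi.div_apply, Pi.pow_apply, Pi.mul_apply, Pi.sub_apply, Nat.cast_ofNat, Nat.reduceSub, pow_one]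
  field_simp [F3]
  linear_combination (sh x * (4 * ch x ^ 2 - 6 * sh x ^ 2)) * sq2

private lemma hF3 (x : ℝ) : HasDerivAt F3 (F4 x) x := by
  have h : HasDerivAt F3 _ x := ((((((hsh x).const_mul 4).mul ((hch x).pow 2)).sub (((hsh x).pow 3).const_mul 6)).const_mul
      (Real.sqrt 2)).div ((hch x).pow 5)) (pow_ne_zero 5 (ch_ne x))
  convert h using 1
  have hc := ch_ne x
  simp only [F4, Pi.div_apply, Pi.pow_apply, Pi.mul_apply, Pi.sub_apply, Nat.cast_ofNat, Nat.reduceSub, pow_one]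
  field_simp [F4]
  ring

private lemma hU0 (x : ℝ) : HasDerivAt U0 (G1 x) x := by
  have hU : U0 = fun x => sh x / ch x := by
    funext y; exact Real.tanh_eq_sinh_div_cosh _
  rw [hU]
  have h : HasDerivAt (fun x => sh x / ch x) _ x := (hsh x).fun_div (hch x) (ch_ne x)
  convert h using 1
  have hc := ch_ne x
  have h1 := ch_sq x
  simp only [G1]
  field_simp [G1]
  linear_combination -(ch_sq x)

private lemma hG1 (x : ℝ) : HasDerivAt G1 (G2 x) x := by
  have h : HasDerivAt G1 _ x := (hasDerivAt_const x (1:ℝ)).div (((hch x).pow 2).const_mul (Real.sqrt 2))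
    (mul_ne_zero r2_ne (pow_ne_zero 2 (ch_ne x)))
  convert h using 1
  have hc := ch_ne x
  simp only [G2, Pi.div_apply, Pi.pow_apply, Pi.mul_apply, Pi.sub_apply, Nat.cast_ofNat, Nat.reduceSub, pow_one]
  field_simp [G2]
  linear_combination (-sh x) * sq2



-- derivative packaging
private lemma hd1 (K x : ℝ) : deriv (fun y => K * F0 y) x = K * F1 x :=
  ((hF0 x).const_mul K).deriv

private lemma dKF0 (K : ℝ) : deriv (fun y => K * F0 y) = fun y => K * F1 y :=
  funext fun y => ((hF0 y).const_mul K).deriv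
private lemma dKF1 (K : ℝ) : deriv (fun y => K * F1 y) = fun y => K * F2 y :=
  funext fun y => ((hF1 y).const_mul K).deriv
private lemma dKF2 (K : ℝ) : deriv (fun y => K * F2 y) = fun y => K * F3 y :=
  funext fun y => ((hF2 y).const_mul K).deriv
private lemma dKF3 (K : ℝ) : deriv (fun y => K * F3 y) = fun y => K * F4 y :=
  funext fun y => ((hF3 y).const_mul K).deriv

private lemma hd2 (K x : ℝ) : iteratedDeriv 2 (fun y => K * F0 y) x = K * F2 x := by
  rw [show (2:ℕ) = 1+1 from rfl, iteratedDeriv_succ, iteratedDeriv_one, dKF0, dKF1]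

private lemma hd4 (K x : ℝ) : iteratedDeriv 4 (fun y => K * F0 y) x = K * F4 x := by
  rw [show (4:ℕ) = 3+1 from rfl, iteratedDeriv_succ, show (3:ℕ) = 2+1 from rfl,
    iteratedDeriv_succ, show (2:ℕ) = 1+1 from rfl, iteratedDeriv_succ, iteratedDeriv_one,
    dKF0, dKF1, dKF2, dKF3]

private lemma hs1 (K x : ℝ) : deriv (fun y => U0 y + K * F0 y) x = G1 x + K * F1 x :=
  ((hU0 x).add ((hF0 x).const_mul K)).deriv

private lemma dU0 : deriv U0 = G1 := funext fun y => (hU0 y).deriv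
private lemma dG1 : deriv G1 = G2 := funext fun y => (hG1 y).deriv

private lemma hs2 (K x : ℝ) : iteratedDeriv 2 (fun y => U0 y + K * F0 y) x = G2 x + K * F2 x := by
  rw [show (2:ℕ) = 1+1 from rfl, iteratedDeriv_succ, iteratedDeriv_one]
  have h : deriv (fun y => U0 y + K * F0 y) = fun y => G1 y + K * F1 y :=
    funext fun y => ((hU0 y).add ((hF0 y).const_mul K)).deriv
  rw [h]
  exact ((hG1 x).add ((hF1 x).const_mul K)).deriv

private lemma hU2 (x : ℝ) : iteratedDeriv 2 U0 x = G2 x := by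
  rw [show (2:ℕ) = 1+1 from rfl, iteratedDeriv_succ, iteratedDeriv_one, dU0, dG1]

-- real Beta integral
private lemma beta_aux {a b T : ℝ} (ha : 0 < a) (hb : 0 < b) (hT : 0 < T) :
    ∫ s in (0:ℝ)..T, (T - s) ^ (a - 1) * s ^ (b - 1)
      = Real.Gamma a * Real.Gamma b / Real.Gamma (a + b) * T ^ (a + b - 1) := by
  have h1 := Complex.betaIntegral_scaled (b : ℂ) (a : ℂ) hT
  have h2 := Complex.Gamma_mul_Gamma_eq_betaIntegral
    (show 0 < (b:ℂ).re by simpa using hb) (show 0 < (a:ℂ).re by simpa using ha)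
  have hG : Real.Gamma (a + b) ≠ 0 := (Real.Gamma_pos_of_pos (by linarith)).ne'
  have h3 : ∫ x in (0:ℝ)..T, (x : ℂ) ^ ((b:ℂ) - 1) * ((T : ℂ) - x) ^ ((a:ℂ) - 1)
      = ((∫ s in (0:ℝ)..T, (T - s) ^ (a - 1) * s ^ (b - 1) : ℝ) : ℂ) := by
    rw [← intervalIntegral.integral_ofReal]
    apply intervalIntegral.integral_congr
    intro s hs
    rw [Set.uIcc_of_le hT.le] at hs
    have hs0 : (0:ℝ) ≤ s := hs.1
    have hsT : (0:ℝ) ≤ T - s := by linarith [hs.2]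
    show (s:ℂ) ^ ((b:ℂ)-1) * ((T:ℂ) - s) ^ ((a:ℂ)-1) = (((T - s)^(a-1) * s^(b-1) : ℝ) : ℂ)
    rw [show ((T:ℂ) - s) = ((T - s : ℝ) : ℂ) by push_cast; ring,
        show ((b:ℂ) - 1) = ((b - 1 : ℝ) : ℂ) by push_cast; ring,
        show ((a:ℂ) - 1) = ((a - 1 : ℝ) : ℂ) by push_cast; ring,
        ← Complex.ofReal_cpow hs0, ← Complex.ofReal_cpow hsT]
    push_cast
    ring
  rw [h3] at h1
  have h4 : Complex.betaIntegral (b:ℂ) (a:ℂ)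
      = ((Real.Gamma a * Real.Gamma b / Real.Gamma (a + b) : ℝ) : ℂ) := by
    have hGc : Complex.Gamma ((b:ℂ) + (a:ℂ)) = ((Real.Gamma (a+b) : ℝ) : ℂ) := by
      rw [show ((b:ℂ) + a) = (((b + a : ℝ)) : ℂ) by push_cast; ring, Complex.Gamma_ofReal,
        add_comm]
    rw [Complex.Gamma_ofReal, Complex.Gamma_ofReal, hGc] at h2
    rw [show ((Real.Gamma a * Real.Gamma b / Real.Gamma (a + b) : ℝ) : ℂ)
      = ((Real.Gamma a : ℝ) : ℂ) * ((Real.Gamma b : ℝ) : ℂ) / ((Real.Gamma (a+b) : ℝ) : ℂ) by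
        push_cast; ring]
    rw [eq_div_iff (show ((Real.Gamma (a+b) : ℝ) : ℂ) ≠ 0 by exact_mod_cast hG)]
    linear_combination -h2
  rw [h4] at h1
  have h5 : ((T:ℂ)) ^ ((b:ℂ) + (a:ℂ) - 1) = ((T ^ (a + b - 1) : ℝ) : ℂ) := by
    rw [show ((b:ℂ) + (a:ℂ) - 1) = ((a + b - 1 : ℝ) : ℂ) by push_cast; ring,
      ← Complex.ofReal_cpow hT.le]
  rw [h5] at h1
  have := h1
  rw [← Complex.ofReal_mul] at this
  have h6 := Complex.ofReal_inj.mp this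
  rw [h6]; ring

private lemma beta_integrable {a b T : ℝ} (ha : 0 < a) (hb : 0 < b) (hT : 0 < T) :
    IntervalIntegrable (fun s => (T - s) ^ (a - 1) * s ^ (b - 1)) MeasureTheory.volume 0 T := by
  have half : (0:ℝ) < T/2 := by linarith
  have i1 : IntervalIntegrable (fun s => (T - s) ^ (a - 1) * s ^ (b - 1))
      MeasureTheory.volume 0 (T/2) := by
    apply IntervalIntegrable.continuousOn_mul
      (intervalIntegral.intervalIntegrable_rpow' (by linarith))
    apply ContinuousOn.rpow_const ((continuous_const.sub continuous_id).continuousOn)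
    intro y hy
    rw [Set.uIcc_of_le half.le] at hy
    exact Or.inl (by simp only [Pi.sub_apply, id]; intro h; nlinarith [hy.2])
  have i2 : IntervalIntegrable (fun s => (T - s) ^ (a - 1) * s ^ (b - 1))
      MeasureTheory.volume (T/2) T := by
    have base : IntervalIntegrable (fun u : ℝ => u ^ (a - 1)) MeasureTheory.volume 0 (T/2) :=
      intervalIntegral.intervalIntegrable_rpow' (by linarith)
    have comp := base.comp_sub_left T
    rw [show T - T/2 = T/2 by ring, show T - 0 = T by ring] at comp
    apply IntervalIntegrable.mul_continuousOn comp.symm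
    apply ContinuousOn.rpow_const continuousOn_id
    intro y hy
    rw [Set.uIcc_of_le (by linarith : T/2 ≤ T)] at hy
    exact Or.inl (by intro h; rw [id] at h; nlinarith [hy.1])
  exact i1.trans i2

private lemma hU1 (x : ℝ) : deriv U0 x = G1 x := (hU0 x).deriv

private lemma beta_int {a b T : ℝ} (ha : 0 < a) (hb : 0 < b) (hT : 0 < T) :
    ∫ s in (0:ℝ)..T, (T - s) ^ (a - 1) * s ^ b
      = Real.Gamma a * Real.Gamma (b + 1) / Real.Gamma (a + b + 1) * T ^ (a + b) := by
  have h := beta_aux ha (by linarith : 0 < b + 1) hT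
  simp only [add_sub_cancel_right] at h
  rw [show a + (b + 1) - 1 = a + b by ring, show a + (b + 1) = a + b + 1 by ring] at h
  exact h

private lemma beta_int_integrable {a b T : ℝ} (ha : 0 < a) (hb : 0 < b) (hT : 0 < T) :
    IntervalIntegrable (fun s => (T - s) ^ (a - 1) * s ^ b) MeasureTheory.volume 0 T := by
  have h := beta_integrable ha (by linarith : 0 < b + 1) hT
  simpa only [add_sub_cancel_right] using h

end NIMaux

set_option maxHeartbeats 2000000 in
/-- Second NIM iterate `u₂ = 𝓛(u₁) + 𝓝(u₀+u₁) − 𝓝(u₀)` for the fourth-order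
time-fractional Cahn–Hilliard equation with initial datum `tanh(x/√2)`. -/
theorem stmt_15 (α μ : ℝ) (hα : 0 < α)
    (u₀ : ℝ → ℝ) (hu₀ : ∀ x, u₀ x = Real.tanh (x / Real.sqrt 2))
    (u₁ : ℝ → ℝ → ℝ)
    (hu₁ : ∀ x t, u₁ x t =
      μ * (1 / Real.cosh (x / Real.sqrt 2)) ^ 2
        / (Real.sqrt 2 * Real.Gamma (α + 1)) * t ^ α)
    (u₂ : ℝ → ℝ → ℝ)
    (hu₂ : ∀ (x t : ℝ), 0 < t → u₂ x t =
      (1 / Real.Gamma α) * ∫ s in (0:ℝ)..t, (t - s) ^ (α - 1) *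
        (μ * deriv (fun y => u₁ y s) x
          - iteratedDeriv 2 (fun y => u₁ y s) x
          - iteratedDeriv 4 (fun y => u₁ y s) x
          + 6 * (u₀ x + u₁ x s) * (deriv (fun y => u₀ y + u₁ y s) x) ^ 2
          + 3 * (u₀ x + u₁ x s) ^ 2 * iteratedDeriv 2 (fun y => u₀ y + u₁ y s) x
          - 6 * u₀ x * (deriv u₀ x) ^ 2
          - 3 * (u₀ x) ^ 2 * iteratedDeriv 2 u₀ x)) :
    ∀ (x t : ℝ), 0 < t →
      u₂ x t =
        -(μ ^ 2 * Real.tanh (x / Real.sqrt 2) * (1 / Real.cosh (x / Real.sqrt 2)) ^ 2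
            / Real.Gamma (2 * α + 1)) * t ^ (2 * α)
        + 3 * μ ^ 2 * Real.Gamma (2 * α + 1) * (4 * Real.cosh (Real.sqrt 2 * x) - 11)
            * Real.tanh (x / Real.sqrt 2) * (1 / Real.cosh (x / Real.sqrt 2)) ^ 6
            / (2 * Real.Gamma (α + 1) ^ 2 * Real.Gamma (3 * α + 1)) * t ^ (3 * α)
        + 3 * μ ^ 3 * Real.Gamma (3 * α + 1) * (3 * Real.cosh (Real.sqrt 2 * x) - 4)
            * (1 / Real.cosh (x / Real.sqrt 2)) ^ 8
            / (2 * Real.sqrt 2 * Real.Gamma (α + 1) ^ 3 * Real.Gamma (4 * α + 1))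
            * t ^ (4 * α) := by
  have hu₀' : u₀ = U0 := funext fun y => hu₀ y
  subst hu₀'
  have hu₁' : u₁ = fun y s => μ / (Real.sqrt 2 * Real.Gamma (α + 1)) * s ^ α * F0 y := by
    funext y s; rw [hu₁]; simp only [F0, ch]; ring
  subst hu₁'
  intro x t ht
  have hG : 0 < Real.Gamma (α + 1) := Real.Gamma_pos_of_pos (by linarith)
  have hGa : Real.Gamma α ≠ 0 := (Real.Gamma_pos_of_pos hα).ne'
  have hG2 : 0 < Real.Gamma (2 * α + 1) := Real.Gamma_pos_of_pos (by linarith)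
  have hG3 : 0 < Real.Gamma (3 * α + 1) := Real.Gamma_pos_of_pos (by linarith)
  have hG4 : 0 < Real.Gamma (4 * α + 1) := Real.Gamma_pos_of_pos (by linarith)
  set C₁ : ℝ := -(μ ^ 2 * (sh x / ch x) * (1 / ch x) ^ 2 / Real.Gamma (α + 1)) with hC₁
  set C₂ : ℝ := 3 * μ ^ 2 * (4 * (2 * ch x ^ 2 - 1) - 11) * (sh x / ch x) * (1 / ch x) ^ 6
      / (2 * Real.Gamma (α + 1) ^ 2) with hC₂
  set C₃ : ℝ := 3 * μ ^ 3 * (3 * (2 * ch x ^ 2 - 1) - 4) * (1 / ch x) ^ 8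
      / (2 * Real.sqrt 2 * Real.Gamma (α + 1) ^ 3) with hC₃
  have hstep : u₂ x t = (1 / Real.Gamma α) * ∫ s in (0:ℝ)..t,
      (C₁ * ((t - s) ^ (α - 1) * s ^ α) + C₂ * ((t - s) ^ (α - 1) * s ^ (2 * α))
        + C₃ * ((t - s) ^ (α - 1) * s ^ (3 * α))) := by
    rw [hu₂ x t ht]
    congr 1
    apply intervalIntegral.integral_congr
    intro s hs
    rw [Set.uIcc_of_le ht.le] at hs
    have hs0 : 0 ≤ s := hs.1
    simp only [hd1, hd2, hd4, hs1, hs2, hU1, hU2]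
    have e2 : s ^ (2 * α) = (s ^ α) ^ 2 := by
      rw [show (2 : ℝ) * α = α * 2 by ring, Real.rpow_mul hs0, Real.rpow_two]
    have e3 : s ^ (3 * α) = (s ^ α) ^ 3 := by
      rw [show (3 : ℝ) * α = α * 3 by ring, Real.rpow_mul hs0, ← Real.rpow_natCast (s ^ α) 3]
      norm_num
    rw [e2, e3]
    have core : ∀ S : ℝ,
        μ * (μ / (Real.sqrt 2 * Real.Gamma (α + 1)) * S * F1 x)
          - μ / (Real.sqrt 2 * Real.Gamma (α + 1)) * S * F2 x
          - μ / (Real.sqrt 2 * Real.Gamma (α + 1)) * S * F4 x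
          + 6 * (U0 x + μ / (Real.sqrt 2 * Real.Gamma (α + 1)) * S * F0 x)
              * (G1 x + μ / (Real.sqrt 2 * Real.Gamma (α + 1)) * S * F1 x) ^ 2
          + 3 * (U0 x + μ / (Real.sqrt 2 * Real.Gamma (α + 1)) * S * F0 x) ^ 2
              * (G2 x + μ / (Real.sqrt 2 * Real.Gamma (α + 1)) * S * F2 x)
          - 6 * U0 x * G1 x ^ 2 - 3 * U0 x ^ 2 * G2 x
        = C₁ * S + C₂ * S ^ 2 + C₃ * S ^ 3 := by
      intro S
      rw [show U0 x = sh x / ch x from Real.tanh_eq_sinh_div_cosh _]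
      simp only [F0, F1, F2, F4, G1, G2, hC₁, hC₂, hC₃]
      have hcne := ch_ne x
      have hGne := hG.ne'
      field_simp
      linear_combination ((-6 : ℝ) * μ * (Real.sqrt 2) ^ 2 * (Real.Gamma (α + 1)) ^ 2 * S * ch x ^ 4 + (42 : ℝ) * μ * (Real.sqrt 2) ^ 2 * (Real.Gamma (α + 1)) ^ 2 * S * ch x ^ 2 * sh x ^ 2 + (-6 : ℝ) * μ * (Real.sqrt 2) ^ 2 * (Real.Gamma (α + 1)) ^ 2 * S * ch x ^ 2 + (-12 : ℝ) * μ ^ 2 * (Real.sqrt 2) ^ 3 * (Real.Gamma (α + 1)) * S ^ 2 * ch x * sh x + (-12 : ℝ) * μ ^ 3 * (Real.sqrt 2) ^ 2 * S ^ 3 + (-36 : ℝ) * μ ^ 2 * (Real.sqrt 2) * (Real.Gamma (α + 1)) * S ^ 2 * ch x * sh x + (-18 : ℝ) * μ ^ 3 * S ^ 3) * ch_sq x + ((-12 : ℝ) * μ ^ 2 * (Real.sqrt 2) * (Real.Gamma (α + 1)) * S ^ 2 * ch x ^ 3 * sh x + (33 : ℝ) * μ ^ 2 * (Real.sqrt 2)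 * (Real.Gamma (α + 1)) * S ^ 2 * ch x * sh x + (-6 : ℝ) * μ ^ 3 * S ^ 3 * ch x ^ 2 + (9 : ℝ) * μ ^ 3 * S ^ 3 + (-6 : ℝ) * μ * (Real.Gamma (α + 1)) ^ 2 * S * ch x ^ 2) * sq2
    rw [core (s ^ α)]
    ring
  rw [hstep]
  rw [intervalIntegral.integral_add (((beta_int_integrable hα hα ht).const_mul C₁).add
        ((beta_int_integrable hα (by linarith : 0 < 2*α) ht).const_mul C₂))
      ((beta_int_integrable hα (by linarith : 0 < 3*α) ht).const_mul C₃),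
    intervalIntegral.integral_add ((beta_int_integrable hα hα ht).const_mul C₁)
      ((beta_int_integrable hα (by linarith : 0 < 2*α) ht).const_mul C₂),
    intervalIntegral.integral_const_mul, intervalIntegral.integral_const_mul,
    intervalIntegral.integral_const_mul,
    beta_int hα hα ht, beta_int hα (by linarith : 0 < 2*α) ht,
    beta_int hα (by linarith : 0 < 3*α) ht]
  have htanh : Real.tanh (x / Real.sqrt 2) = sh x / ch x := Real.tanh_eq_sinh_div_cosh _
  have hcosh2 : Real.cosh (Real.sqrt 2 * x) = 2 * ch x ^ 2 - 1 := by
    rw [show Real.sqrt 2 * x = 2 * (x / Real.sqrt 2) by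
        field_simp; linear_combination x * sq2]
    rw [Real.cosh_two_mul]
    have h := ch_sq x
    simp only [ch, sh] at h ⊢
    linarith
  have hch : (1 : ℝ) / Real.cosh (x / Real.sqrt 2) = 1 / ch x := rfl
  rw [htanh, hcosh2, hch,
    show α + α = 2 * α by ring,
    show α + 2 * α = 3 * α by ring,
    show α + 3 * α = 4 * α by ring]
  simp only [hC₁, hC₂, hC₃]
  have hcne := ch_ne x
  have hrne := r2_ne
  field_simp
end
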